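/- arXiv:2309.10249 — 12 statements merged into one kernel-verified Lean document; each statement's English description precedes it below -/
import Mathlib

section
/- Let F be a field, let A(x) be a polynomial over F with natDegree at most n, let k ≥ 1 be an integer, and let γ ∈ F. Then for every integer j with n+1−k ≤ j ≤ k−1, the coefficient of x^j in the remainder of A(x) upon division by the monic polynomial x^k − γ equals the coefficient of x^j in A(x). -/
open Polynomial

theorem Polynomial.coeff_divByMonic_eq_zero_of_natDegree_lt_add {R : Type*} [Ring R]
    {p q : R[X]} (hq : q.Monic) {j : ℕ} (hp : p.natDegree < j + q.natDegree) :
    (p /ₘ q).coeff j = 0 := by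
  nontriviality R
  by_cases hpq : p.natDegree < q.natDegree
  · rw [(divByMonic_eq_zero_iff hq).mpr (degree_lt_degree hpq), coeff_zero]
  · apply coeff_eq_zero_of_natDegree_lt
    rw [natDegree_divByMonic p hq]
    omega

/-- Writing `p = p %ₘ q + (X ^ k - C γ) * (p /ₘ q)`, the coefficient of `X ^ j` in the product
is `-γ` times that of the quotient, which vanishes by the degree bound. -/
theorem Polynomial.coeff_modByMonic_X_pow_sub_C {R : Type*} [Ring R] {p : R[X]} {j k : ℕ}
    (γ : R) (hjk : j < k) (hp : p.natDegree < j + k) :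
    (p %ₘ (X ^ k - C γ)).coeff j = p.coeff j := by
  nontriviality R
  have hq : (X ^ k - C γ).Monic := monic_X_pow_sub_C γ (by omega)
  have hquot : (p /ₘ (X ^ k - C γ)).coeff j = 0 :=
    coeff_divByMonic_eq_zero_of_natDegree_lt_add hq (by rwa [natDegree_X_pow_sub_C])
  rw [modByMonic_eq_sub_mul_div, coeff_sub, sub_mul, coeff_sub, coeff_X_pow_mul',
    if_neg hjk.not_ge, coeff_C_mul, hquot, mul_zero, sub_zero, sub_zero]

theorem stmt_0_general {F : Type*} [Field F] (n k : ℕ) (γ : F)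
    (A : F[X]) (hA : A.natDegree ≤ n)
    (j : ℕ) (hj₁ : n + 1 ≤ j + k) (hj₂ : j ≤ k - 1) :
    (A %ₘ (X ^ k - C γ)).coeff j = A.coeff j :=
  coeff_modByMonic_X_pow_sub_C γ (by omega) (by omega)

/-- Modulo technique (Lemma 1 / Remark 1): reducing a polynomial `A` of degree at most `n`
modulo the monic polynomial `x^k - γ` leaves the coefficients of `x^j` with
`n + 1 - k ≤ j ≤ k - 1` unchanged. -/
theorem stmt_0 {F : Type*} [Field F] (n k : ℕ) (hk : 1 ≤ k) (γ : F)
    (A : F[X]) (hA : A.natDegree ≤ n)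
    (j : ℕ) (hj₁ : n + 1 ≤ j + k) (hj₂ : j ≤ k - 1) :
    (A %ₘ (X ^ k - C γ)).coeff j = A.coeff j :=
  stmt_0_general n k γ A hA j hj₁ hj₂
end

section
/- Let F be a field, let k ≥ 1 be an integer with (k : F) ≠ 0, and let ζ ∈ F be a primitive k-th root of unity. Let A(x) be a polynomial over F with natDegree at most n, and let s be an integer with 2s ≤ n and n − s + 1 ≤ k ≤ n. Then for every integer j with s ≤ j ≤ n − s, the coefficient of x^j in A(x) equals (k : F)⁻¹ · Σ_{t=0}^{k−1} A(ζ^t) · (ζ^{t·j})⁻¹. -/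
open Polynomial Finset

/-! Evaluating `A` at `ζ ^ t` and twisting by `ζ ^ (-t j)`, the sum over `t < k` collects
`k` times every coefficient `A.coeff i` with `i ≡ j [ZMOD k]` (orthogonality of characters
of `ℤ ⧸ k`). If every exponent `i` of `A` satisfies `|i - j| < k`, the only such `i` is
`j` itself, so the inverse DFT returns `A.coeff j`. -/

namespace IsPrimitiveRoot

variable {F : Type*} [Field F] {ζ : F} {k : ℕ}

theorem geom_sum_zpow (hζ : IsPrimitiveRoot ζ k) (m : ℤ) :
    ∑ t ∈ range k, (ζ ^ m) ^ t = if (k : ℤ) ∣ m then (k : F) else 0 := by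
  split_ifs with hdvd
  · simp [(hζ.zpow_eq_one_iff_dvd m).mpr hdvd]
  · have hne : ζ ^ m ≠ 1 := mt (hζ.zpow_eq_one_iff_dvd m).mp hdvd
    have hpow : (ζ ^ m) ^ k = 1 := by
      rw [← zpow_natCast, ← zpow_mul, mul_comm, zpow_mul, hζ.zpow_eq_one, one_zpow]
    rw [geom_sum_eq hne, hpow, sub_self, zero_div]

theorem sum_eval_pow_mul_inv (hζ : IsPrimitiveRoot ζ k) (A : F[X]) (j : ℕ) :
    ∑ t ∈ range k, A.eval (ζ ^ t) * (ζ ^ (t * j))⁻¹ =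
      k * ∑ i ∈ A.support.filter (fun i : ℕ ↦ (k : ℤ) ∣ i - j), A.coeff i := by
  rcases Nat.eq_zero_or_pos k with rfl | hk
  · simp
  have hterm (t i : ℕ) : (ζ ^ t) ^ i * (ζ ^ (t * j))⁻¹ = (ζ ^ ((i : ℤ) - j)) ^ t := by
    rw [zpow_sub₀ (hζ.ne_zero hk.ne'), zpow_natCast, zpow_natCast]
    ring
  calc ∑ t ∈ range k, A.eval (ζ ^ t) * (ζ ^ (t * j))⁻¹
      = ∑ i ∈ A.support, A.coeff i * ∑ t ∈ range k, (ζ ^ ((i : ℤ) - j)) ^ t := by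
        simp only [eval_eq_sum, Polynomial.sum, sum_mul, mul_sum, mul_assoc, hterm]
        exact sum_comm
    _ = k * ∑ i ∈ A.support.filter (fun i : ℕ ↦ (k : ℤ) ∣ i - j), A.coeff i := by
        rw [mul_sum, sum_filter]
        refine sum_congr rfl fun i _ ↦ ?_
        rw [hζ.geom_sum_zpow]
        split_ifs <;> ring

theorem coeff_eq_inv_mul_sum_eval_pow (hζ : IsPrimitiveRoot ζ k) (hkF : (k : F) ≠ 0)
    {A : F[X]} {j : ℕ} (hjk : j < k) (hA : A.natDegree < j + k) :
    A.coeff j = (k : F)⁻¹ * ∑ t ∈ range k, A.eval (ζ ^ t) * (ζ ^ (t * j))⁻¹ := by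
  have halias : ∑ i ∈ A.support.filter (fun i : ℕ ↦ (k : ℤ) ∣ i - j), A.coeff i = A.coeff j := by
    refine sum_eq_single j (fun i hi hij ↦ ?_) (fun hj ↦ ?_)
    · obtain ⟨hiA, hdvd⟩ := mem_filter.mp hi
      have hik : |(i : ℤ) - j| < k := by
        have := le_natDegree_of_mem_supp i hiA
        rw [abs_sub_lt_iff]
        omega
      exact absurd (Int.eq_zero_of_abs_lt_dvd hdvd hik) (by omega)
    · simpa using hj
  rw [hζ.sum_eval_pow_mul_inv, halias, inv_mul_cancel_left₀ hkF]

end IsPrimitiveRoot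

theorem stmt_1_general {F : Type*} [Field F] (k : ℕ) (hkF : (k : F) ≠ 0)
    (ζ : F) (hζ : IsPrimitiveRoot ζ k)
    (A : F[X]) (n s : ℕ) (hA : A.natDegree ≤ n)
    (hk₁ : n - s + 1 ≤ k)
    (j : ℕ) (hj₁ : s ≤ j) (hj₂ : j ≤ n - s) :
    A.coeff j = (k : F)⁻¹ * ∑ t ∈ range k, A.eval (ζ ^ t) * (ζ ^ (t * j))⁻¹ :=
  hζ.coeff_eq_inv_mul_sum_eval_pow hkF (by omega) (by omega)

/-- Lemma 1: recovering middle coefficients of a degree-`n` polynomial from its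
evaluations on the `k`-th roots of unity via the closed-form inverse DFT,
when `n - s + 1 ≤ k ≤ n` and `2s ≤ n`. -/
theorem stmt_1 {F : Type*} [Field F] (k : ℕ) (hk : 1 ≤ k) (hkF : (k : F) ≠ 0)
    (ζ : F) (hζ : IsPrimitiveRoot ζ k)
    (A : F[X]) (n s : ℕ) (hA : A.natDegree ≤ n)
    (hs : 2 * s ≤ n) (hk₁ : n - s + 1 ≤ k) (hk₂ : k ≤ n)
    (j : ℕ) (hj₁ : s ≤ j) (hj₂ : j ≤ n - s) :
    A.coeff j = (k : F)⁻¹ * ∑ t ∈ range k, A.eval (ζ ^ t) * (ζ ^ (t * j))⁻¹ :=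
  stmt_1_general k hkF ζ hζ A n s hA hk₁ j hj₁ hj₂
end

section
/- Let F be a field, let p ≥ 1 and k ≥ 1 be integers, let γ ∈ F, and let A(x) be a polynomial over F with natDegree at most (k+1)p − 2. Then the coefficient of x^{p−1} in the remainder of A(x) upon division by x^p − γ equals Σ_{j=0}^{k−1} γ^j · c_{(j+1)p−1}, where c_i denotes the coefficient of x^i in A(x). -/
open Polynomial Finset

lemma X_pow_modByMonic_X_pow_sub_C {F : Type*} [Field F] (p : ℕ) (hp : 1 ≤ p) (γ : F) (n : ℕ) :
    (X ^ n : F[X]) %ₘ (X ^ p - C γ) = C (γ ^ (n / p)) * X ^ (n % p) := by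
  have hp0 : 0 < p := hp
  have hm : (X ^ p - C γ : F[X]).Monic := monic_X_pow_sub_C γ (by omega)
  have hn : p * (n / p) + n % p = n := Nat.div_add_mod n p
  have h2 : (X ^ n : F[X]) - C (γ ^ (n / p)) * X ^ (n % p)
      = ((X ^ p) ^ (n / p) - (C γ) ^ (n / p)) * X ^ (n % p) := by
    rw [sub_mul, ← pow_mul, ← pow_add, hn, ← C_pow]
  have hdvd : (X ^ p - C γ : F[X]) ∣ X ^ n - C (γ ^ (n / p)) * X ^ (n % p) :=
    h2 ▸ (sub_dvd_pow_sub_pow _ _ _).mul_right _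
  have hz : ((X ^ n : F[X]) - C (γ ^ (n / p)) * X ^ (n % p)) %ₘ (X ^ p - C γ) = 0 :=
    (modByMonic_eq_zero_iff_dvd hm).2 hdvd
  have hlt : (C (γ ^ (n / p)) * X ^ (n % p) : F[X]).degree < (X ^ p - C γ : F[X]).degree := by
    rw [degree_X_pow_sub_C hp0]
    calc (C (γ ^ (n / p)) * X ^ (n % p) : F[X]).degree ≤ (n % p : ℕ) :=
          degree_C_mul_X_pow_le _ _
      _ < (p : ℕ) := by exact_mod_cast Nat.cast_lt.2 (Nat.mod_lt n hp0)
  have hself : (C (γ ^ (n / p)) * X ^ (n % p) : F[X]) %ₘ (X ^ p - C γ)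
      = C (γ ^ (n / p)) * X ^ (n % p) := (modByMonic_eq_self_iff hm).2 hlt
  calc (X ^ n : F[X]) %ₘ (X ^ p - C γ)
      = ((X ^ n - C (γ ^ (n / p)) * X ^ (n % p)) + C (γ ^ (n / p)) * X ^ (n % p)) %ₘ (X ^ p - C γ) := by
        ring_nf
    _ = C (γ ^ (n / p)) * X ^ (n % p) := by rw [add_modByMonic, hz, hself, zero_add]

/-- Core of Lemma 2: reducing a polynomial of degree at most `(k+1)p - 2` modulo
`x^p - γ` collects the coefficients at the strided positions `(j+1)p - 1`,
weighted by powers of `γ`, into the coefficient of `x^(p-1)` of the remainder. -/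
theorem stmt_2 {F : Type*} [Field F] (p k : ℕ) (hp : 1 ≤ p) (hk : 1 ≤ k) (γ : F)
    (A : F[X]) (hA : A.natDegree ≤ (k + 1) * p - 2) :
    (A %ₘ (X ^ p - C γ)).coeff (p - 1)
      = ∑ j ∈ range k, γ ^ j * A.coeff ((j + 1) * p - 1) := by
  set N := (k + 1) * p - 1 with hN
  have hdeg : A.natDegree < N := by
    have : 2 ≤ (k + 1) * p := by nlinarith
    omega
  have hrepr : A = ∑ n ∈ range N, C (A.coeff n) * X ^ n := by
    conv_lhs => rw [A.as_sum_range' N hdeg]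
    simp [smul_eq_C_mul, Polynomial.C_mul_X_pow_eq_monomial]
  have hmod : A %ₘ (X ^ p - C γ)
      = ∑ n ∈ range N, C (A.coeff n) * (C (γ ^ (n / p)) * X ^ (n % p)) := by
    conv_lhs => rw [hrepr]
    rw [show ∀ q : F[X], (∑ n ∈ range N, C (A.coeff n) * X ^ n) %ₘ q
        = modByMonicHom q (∑ n ∈ range N, C (A.coeff n) * X ^ n) from fun _ => rfl,
      map_sum]
    refine Finset.sum_congr rfl fun n _ => ?_
    rw [modByMonicHom_apply, ← smul_eq_C_mul, smul_modByMonic,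
      X_pow_modByMonic_X_pow_sub_C p hp γ n, smul_eq_C_mul]
  rw [hmod, finset_sum_coeff]
  have hterm : ∀ n ∈ range N,
      (C (A.coeff n) * (C (γ ^ (n / p)) * X ^ (n % p))).coeff (p - 1)
        = if n % p = p - 1 then γ ^ (n / p) * A.coeff n else 0 := by
    intro n _
    rw [← mul_assoc, ← C_mul, coeff_C_mul_X_pow]
    split_ifs with h1 h2
    · ring
    · exfalso; omega
    · exfalso; omega
    · rfl
  rw [Finset.sum_congr rfl hterm]
  have hsub : (range k).image (fun j => j * p + (p - 1)) ⊆ range N := by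
    intro n hn
    simp only [mem_image, mem_range] at hn ⊢
    obtain ⟨j, hj, rfl⟩ := hn
    have h1 : (k + 1) * p = k * p + p := by ring
    have h2 : j * p + p ≤ k * p := by
      have : (j + 1) * p ≤ k * p := Nat.mul_le_mul_right p hj
      nlinarith
    omega
  have hzero : ∀ n ∈ range N, n ∉ (range k).image (fun j => j * p + (p - 1)) →
      (if n % p = p - 1 then γ ^ (n / p) * A.coeff n else 0) = 0 := by
    intro n hn hnot
    rw [if_neg]
    intro hmod'
    apply hnot
    simp only [mem_image, mem_range]
    refine ⟨n / p, ?_, ?_⟩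
    · by_contra hjk
      push_neg at hjk
      have h1 : k * p ≤ (n / p) * p := Nat.mul_le_mul_right p hjk
      have h2 : (n / p) * p + n % p = n := by
        rw [mul_comm]; exact Nat.div_add_mod n p
      have h3 : n < N := mem_range.1 hn
      have h4 : (k + 1) * p = k * p + p := by ring
      omega
    · have h2 : (n / p) * p + n % p = n := by
        rw [mul_comm]; exact Nat.div_add_mod n p
      omega
  rw [← Finset.sum_subset hsub hzero, Finset.sum_image ?hinj]
  case hinj =>
    intro a _ b _ hab
    have := Nat.add_right_cancel hab
    exact Nat.eq_of_mul_eq_mul_right hp this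
  refine Finset.sum_congr rfl fun j _ => ?_
  have hmodv : (j * p + (p - 1)) % p = p - 1 := by
    rw [add_comm, Nat.add_mul_mod_self_right]
    exact Nat.mod_eq_of_lt (by omega)
  have hdivv : (j * p + (p - 1)) / p = j := by
    rw [add_comm, Nat.add_mul_div_right _ _ (by omega : 0 < p),
      Nat.div_eq_of_lt (by omega), zero_add]
  have hidx : (j + 1) * p - 1 = j * p + (p - 1) := by
    have : (j + 1) * p = j * p + p := by ring
    omega
  rw [if_pos hmodv, hdivv, hidx]
end

section
/- Let F be a field, let p ≥ 1 and k ≥ 1 be integers with (k : F) ≠ 0, let ζ ∈ F be a primitive k-th root of unity, and let A(x) be a polynomial over F with natDegree at most (k+1)p − 2. Then for every integer j with 0 ≤ j ≤ k−1, the coefficient of x^{(j+1)p−1} in A(x) equals (k : F)⁻¹ · Σ_{i=0}^{k−1} (ζ^{i·j})⁻¹ · r_i, where r_i denotes the coefficient of x^{p−1} in the remainder of A(x) upon division by x^p − ζ^i. -/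
/-!
Write `A = Σ aₙ Xⁿ`. Since `X ^ p ≡ c` modulo `X ^ p - c`, the monomial `Xⁿ` reduces to
`c ^ (n / p) * X ^ (n % p)`, so the coefficient of `X ^ (p - 1)` in `A mod (X ^ p - c)` is
`B(c) = Σₘ a_{mp+p-1} cᵐ`; the degree bound makes `B` have degree `< k`. Evaluating at
`c = ζ ^ i` is a discrete Fourier transform of the coefficients of `B`, which the orthogonality
`Σᵢ ζ^{i(m-j)} = k [m = j]` inverts.
-/

open Polynomial Finset

theorem Finset.sum_range_mul_ite_mod_eq {M : Type*} [AddCommMonoid M] {p r : ℕ} (hr : r < p)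
    (f : ℕ → ℕ → M) (N : ℕ) :
    ∑ n ∈ range (N * p), (if n % p = r then f (n / p) n else 0)
      = ∑ m ∈ range N, f m (m * p + r) := by
  induction N with
  | zero => simp
  | succ N ih =>
    have hp : 0 < p := by omega
    rw [Nat.succ_mul, sum_range_add, ih, sum_range_succ]
    congr 1
    have hblock : ∀ s ∈ range p, (N * p + s) % p = s ∧ (N * p + s) / p = N := fun s hs => by
      have hs : s < p := mem_range.mp hs
      rw [Nat.mul_add_mod_of_lt hs, Nat.mul_comm, Nat.mul_add_div hp, Nat.div_eq_of_lt hs]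
      simp
    rw [sum_congr rfl fun s hs => by rw [(hblock s hs).1, (hblock s hs).2], sum_ite_eq',
      if_pos (mem_range.mpr hr)]

namespace Polynomial

variable {R : Type*} [CommRing R] [Nontrivial R] {p : ℕ}

theorem X_pow_modByMonic_X_pow_sub_C (hp : p ≠ 0) (c : R) (n : ℕ) :
    X ^ n %ₘ (X ^ p - C c) = C (c ^ (n / p)) * X ^ (n % p) := by
  have hq : (X ^ p - C c).Monic := monic_X_pow_sub_C c hp
  have hdvd : X ^ p - C c ∣ X ^ n - C (c ^ (n / p)) * X ^ (n % p) := by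
    have hn : X ^ n - C (c ^ (n / p)) * X ^ (n % p)
        = X ^ (n % p) * ((X ^ p) ^ (n / p) - C c ^ (n / p)) := by
      rw [map_pow, ← pow_mul, mul_sub, ← pow_add, Nat.mod_add_div, mul_comm]
    exact hn ▸ dvd_mul_of_dvd_right (sub_dvd_pow_sub_pow _ _ _) _
  have hp' : 0 < p := Nat.pos_of_ne_zero hp
  rw [modByMonic_eq_of_dvd_sub hq hdvd, modByMonic_eq_self_iff hq, degree_X_pow_sub_C hp']
  exact (degree_C_mul_X_pow_le _ _).trans_lt (by exact_mod_cast Nat.mod_lt n hp')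

theorem coeff_monomial_modByMonic_X_pow_sub_C (hp : p ≠ 0) (c : R) (n : ℕ) (a : R) (r : ℕ) :
    (monomial n a %ₘ (X ^ p - C c)).coeff r = if n % p = r then a * c ^ (n / p) else 0 := by
  rw [← C_mul_X_pow_eq_monomial, ← smul_eq_C_mul, smul_modByMonic,
    X_pow_modByMonic_X_pow_sub_C hp, coeff_smul, coeff_C_mul_X_pow, smul_eq_mul]
  by_cases h : n % p = r <;> simp [h, eq_comm (a := r)]

theorem coeff_modByMonic_X_pow_sub_C_s3 (hp : p ≠ 0) (c : R) {r N : ℕ} (hr : r < p) {A : R[X]}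
    (hA : A.natDegree < N * p) :
    (A %ₘ (X ^ p - C c)).coeff r = ∑ m ∈ range N, A.coeff (m * p + r) * c ^ m := by
  conv_lhs => rw [as_sum_range' A (N * p) hA]
  rw [← modByMonicHom_apply, map_sum, finsetSum_coeff]
  simp only [modByMonicHom_apply, coeff_monomial_modByMonic_X_pow_sub_C hp]
  exact sum_range_mul_ite_mod_eq hr (fun m n => A.coeff n * c ^ m) N

end Polynomial

namespace IsPrimitiveRoot

variable {F : Type*} [Field F] {ζ : F} {k : ℕ}

theorem sum_pow_mul_inv_pow (hζ : IsPrimitiveRoot ζ k) {m j : ℕ} (hm : m < k) (hj : j < k) :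
    ∑ i ∈ range k, ζ ^ (i * m) * (ζ ^ (i * j))⁻¹ = if m = j then (k : F) else 0 := by
  set ξ := ζ ^ m * (ζ ^ j)⁻¹
  have hterm : ∀ i, ζ ^ (i * m) * (ζ ^ (i * j))⁻¹ = ξ ^ i := fun i => by
    rw [mul_pow, inv_pow, ← pow_mul, ← pow_mul, mul_comm m, mul_comm j]
  simp only [hterm]
  have hζj : ζ ^ j ≠ 0 := pow_ne_zero _ (hζ.ne_zero (by omega))
  split_ifs with hmj
  · simp [ξ, hmj, mul_inv_cancel₀ hζj]
  · have hξ1 : ξ ≠ 1 := fun h => hmj <| hζ.pow_inj hm hj <| (mul_inv_eq_one₀ hζj).mp h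
    have hξk : ξ ^ k = 1 := by
      rw [← hterm, pow_mul, pow_mul, hζ.pow_eq_one, one_pow, one_pow, inv_one, mul_one]
    rw [geom_sum_eq hξ1, hξk, sub_self, zero_div]

theorem sum_inv_pow_mul_sum_pow (hζ : IsPrimitiveRoot ζ k) (b : ℕ → F) {j : ℕ}
    (hj : j < k) :
    ∑ i ∈ range k, (ζ ^ (i * j))⁻¹ * ∑ m ∈ range k, b m * (ζ ^ i) ^ m = k * b j := by
  calc ∑ i ∈ range k, (ζ ^ (i * j))⁻¹ * ∑ m ∈ range k, b m * (ζ ^ i) ^ m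
      = ∑ m ∈ range k, b m * ∑ i ∈ range k, ζ ^ (i * m) * (ζ ^ (i * j))⁻¹ := by
        simp only [mul_sum, ← pow_mul]
        rw [sum_comm]
        exact sum_congr rfl fun _ _ => sum_congr rfl fun _ _ => by ring
    _ = ∑ m ∈ range k, if m = j then b m * k else 0 := by
        refine sum_congr rfl fun m hm => ?_
        rw [hζ.sum_pow_mul_inv_pow (mem_range.mp hm) hj, mul_ite, mul_zero]
    _ = k * b j := by rw [sum_ite_eq', if_pos (mem_range.mpr hj), mul_comm]

end IsPrimitiveRoot

/-- Lemma 2: the strided coefficients `c_{(j+1)p-1}` of a polynomial `A` of degree at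
most `(k+1)p - 2` can be recovered by an inverse DFT from the coefficients of
`x^(p-1)` of the remainders of `A` modulo `x^p - ζ^i`, for `ζ` a primitive
`k`-th root of unity. -/
theorem stmt_3 {F : Type*} [Field F] (p k : ℕ) (hp : 1 ≤ p) (hk : 1 ≤ k)
    (hkF : (k : F) ≠ 0) (ζ : F) (hζ : IsPrimitiveRoot ζ k)
    (A : F[X]) (hA : A.natDegree ≤ (k + 1) * p - 2)
    (j : ℕ) (hj : j ≤ k - 1) :
    A.coeff ((j + 1) * p - 1)
      = (k : F)⁻¹ * ∑ i ∈ range k,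
          (ζ ^ (i * j))⁻¹ * (A %ₘ (X ^ p - C (ζ ^ i))).coeff (p - 1) := by
  have hjk : j < k := by omega
  have hkp : (k + 1) * p = k * p + p := Nat.succ_mul k p
  have hkp_pos : 0 < k * p := Nat.mul_pos (by omega) hp
  have hA' : A.natDegree < (k + 1) * p := by omega
  have htop : A.coeff (k * p + (p - 1)) = 0 := coeff_eq_zero_of_natDegree_lt (by omega)
  have hrem : ∀ i, (A %ₘ (X ^ p - C (ζ ^ i))).coeff (p - 1)
      = ∑ m ∈ range k, A.coeff (m * p + (p - 1)) * (ζ ^ i) ^ m := fun i => by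
    rw [coeff_modByMonic_X_pow_sub_C_s3 (by omega) _ (by omega) hA', sum_range_succ, htop,
      zero_mul, add_zero]
  simp only [hrem]
  rw [hζ.sum_inv_pow_mul_sum_pow (fun m => A.coeff (m * p + (p - 1))) hjk,
    inv_mul_cancel_left₀ hkF, Nat.succ_mul, Nat.add_sub_assoc hp]
end

section
/- Let R be a (possibly noncommutative) ring, let K₁, K₂, m ≥ 1 and X ≥ 0 be integers, and let A_{j,k} (1 ≤ j ≤ K₁, 1 ≤ k ≤ m), B_{j,k} (1 ≤ j ≤ m, 1 ≤ k ≤ K₂), R_i and T_i (1 ≤ i ≤ X) be elements of R. Define the SEP encoding polynomials p_A(x) = Σ_{j=1}^{K₁} Σ_{k=1}^{m} A_{j,k} x^{(k−1)+(j−1)m} + Σ_{i=1}^{X} R_i x^{K₁m+i−1} and p_B(x) = Σ_{j=1}^{m} Σ_{k=1}^{K₂} B_{j,k} x^{(m−j)+(k−1)(K₁m+X)} + Σ_{i=1}^{X} T_i x^{(K₂−1)(K₁m+X)+K₁m+i−1} over R. Then for every 1 ≤ i ≤ K₁ and 1 ≤ j ≤ K₂, the coefficient of x^{(m−1)+(i−1)m+(j−1)(K₁m+X)}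 in the product p_A(x)·p_B(x) equals Σ_{k=1}^{m} A_{i,k}·B_{k,j}. -/
open Polynomial Finset

/-- The SEP encoding polynomial of `A` (blocks `A j k` for `j < K₁`, `k < m`,
noise `Rn i` for `i < X`), with 0-based indices. -/
noncomputable def sepA {R : Type*} [Ring R] (K₁ m X : ℕ)
    (A : Fin K₁ → Fin m → R) (Rn : Fin X → R) : R[X] :=
  (∑ j : Fin K₁, ∑ k : Fin m, monomial (k.val + j.val * m) (A j k))
    + ∑ i : Fin X, monomial (K₁ * m + i.val) (Rn i)

/-- The SEP encoding polynomial of `B` (blocks `B j k` for `j < m`, `k < K₂`,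
noise `T i` for `i < X`), with 0-based indices. -/
noncomputable def sepB {R : Type*} [Ring R] (K₁ K₂ m X : ℕ)
    (B : Fin m → Fin K₂ → R) (T : Fin X → R) : R[X] :=
  (∑ j : Fin m, ∑ k : Fin K₂, monomial ((m - 1 - j.val) + k.val * (K₁ * m + X)) (B j k))
    + ∑ i : Fin X, monomial ((K₂ - 1) * (K₁ * m + X) + K₁ * m + i.val) (T i)

/-- Uniqueness of division with remainder. -/
lemma sep_divmod_unique {a b c d m : ℕ} (ha : a < m) (hc : c < m)
    (h : a + b * m = c + d * m) : a = c ∧ b = d := by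
  have hm0 : 0 < m := lt_of_le_of_lt (Nat.zero_le a) ha
  constructor
  · have e1 : (a + b * m) % m = a := by
      rw [Nat.add_mul_mod_self_right, Nat.mod_eq_of_lt ha]
    rw [← e1, h, Nat.add_mul_mod_self_right, Nat.mod_eq_of_lt hc]
  · have e2 : (a + b * m) / m = b := by
      rw [Nat.add_mul_div_right _ _ hm0, Nat.div_eq_of_lt ha, zero_add]
    rw [← e2, h, Nat.add_mul_div_right _ _ hm0, Nat.div_eq_of_lt hc, zero_add]

/-- Decodability of the SEP code: each block `C_{i,j} = Σ_k A_{i,k} B_{k,j}` of the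
matrix product appears as the coefficient of `x^{(m-1)+(i-1)m+(j-1)(K₁m+X)}` in the
product of the SEP encoding polynomials. -/
theorem stmt_5 {R : Type*} [Ring R] (K₁ K₂ m X : ℕ)
    (hK₁ : 1 ≤ K₁) (hK₂ : 1 ≤ K₂) (hm : 1 ≤ m)
    (A : Fin K₁ → Fin m → R) (B : Fin m → Fin K₂ → R)
    (Rn : Fin X → R) (T : Fin X → R)
    (i : Fin K₁) (j : Fin K₂) :
    (sepA K₁ m X A Rn * sepB K₁ K₂ m X B T).coeff
        ((m - 1) + i.val * m + j.val * (K₁ * m + X))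
      = ∑ k : Fin m, A i k * B k j := by
  have him : (i : ℕ) * m + m ≤ K₁ * m := by
    calc (i : ℕ) * m + m = ((i : ℕ) + 1) * m := by ring
      _ ≤ K₁ * m := Nat.mul_le_mul_right m i.isLt
  have hjw : (j : ℕ) * (K₁ * m) + (j : ℕ) * X
      ≤ (K₂ - 1) * (K₁ * m) + (K₂ - 1) * X := by
    have hj' : (j : ℕ) ≤ K₂ - 1 := by have := j.isLt; omega
    calc (j : ℕ) * (K₁ * m) + (j : ℕ) * X = (j : ℕ) * (K₁ * m + X) := by ring
      _ ≤ (K₂ - 1) * (K₁ * m + X) := Nat.mul_le_mul_right _ hj'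
      _ = (K₂ - 1) * (K₁ * m) + (K₂ - 1) * X := by ring
  unfold sepA sepB
  simp only [add_mul, mul_add, Finset.sum_mul, Finset.mul_sum, monomial_mul_monomial,
    coeff_add, Polynomial.finset_sum_coeff, coeff_monomial]
  -- the `Rn * B` block vanishes
  have hz1 : ∀ (x : Fin m) (x1 : Fin K₂),
      (∑ x2 : Fin X,
        if K₁ * m + ↑x2 + (m - 1 - ↑x + (↑x1 * (K₁ * m) + ↑x1 * X)) =
            m - 1 + ↑i * m + (↑j * (K₁ * m) + ↑j * X) then Rn x2 * B x x1 else 0) = 0 := by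
    intro x x1
    apply Finset.sum_eq_zero
    intro t _
    rw [if_neg]
    have hx : (x : ℕ) < m := x.isLt
    have ht : (t : ℕ) < X := t.isLt
    rcases Nat.lt_trichotomy (x1 : ℕ) (j : ℕ) with hc | hc | hc
    · have hle : (x1 : ℕ) * (K₁ * m) + (x1 : ℕ) * X + (K₁ * m + X)
          ≤ (j : ℕ) * (K₁ * m) + (j : ℕ) * X := by
        calc (x1 : ℕ) * (K₁ * m) + (x1 : ℕ) * X + (K₁ * m + X)
            = ((x1 : ℕ) + 1) * (K₁ * m + X) := by ring
          _ ≤ (j : ℕ) * (K₁ * m + X) := Nat.mul_le_mul_right _ hc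
          _ = (j : ℕ) * (K₁ * m) + (j : ℕ) * X := by ring
      obtain ⟨P, hP⟩ : ∃ P, K₁ * m = P := ⟨_, rfl⟩
      rw [hP] at him hle ⊢
      obtain ⟨u1, h1⟩ : ∃ a, (x1 : ℕ) * P = a := ⟨_, rfl⟩
      obtain ⟨u2, h2⟩ : ∃ a, (x1 : ℕ) * X = a := ⟨_, rfl⟩
      obtain ⟨v1, h3⟩ : ∃ a, (j : ℕ) * P = a := ⟨_, rfl⟩
      obtain ⟨v2, h4⟩ : ∃ a, (j : ℕ) * X = a := ⟨_, rfl⟩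
      obtain ⟨r, h5⟩ : ∃ a, (i : ℕ) * m = a := ⟨_, rfl⟩
      rw [h1, h2, h3, h4] at hle ⊢
      rw [h5] at him ⊢
      omega
    · rw [hc]
      obtain ⟨P, hP⟩ : ∃ P, K₁ * m = P := ⟨_, rfl⟩
      rw [hP] at him ⊢
      obtain ⟨v1, h3⟩ : ∃ a, (j : ℕ) * P = a := ⟨_, rfl⟩
      obtain ⟨v2, h4⟩ : ∃ a, (j : ℕ) * X = a := ⟨_, rfl⟩
      obtain ⟨r, h5⟩ : ∃ a, (i : ℕ) * m = a := ⟨_, rfl⟩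
      rw [h3, h4]
      rw [h5] at him ⊢
      omega
    · have hle : (j : ℕ) * (K₁ * m) + (j : ℕ) * X + (K₁ * m + X)
          ≤ (x1 : ℕ) * (K₁ * m) + (x1 : ℕ) * X := by
        calc (j : ℕ) * (K₁ * m) + (j : ℕ) * X + (K₁ * m + X)
            = ((j : ℕ) + 1) * (K₁ * m + X) := by ring
          _ ≤ (x1 : ℕ) * (K₁ * m + X) := Nat.mul_le_mul_right _ hc
          _ = (x1 : ℕ) * (K₁ * m) + (x1 : ℕ) * X := by ring
      obtain ⟨P, hP⟩ : ∃ P, K₁ * m = P := ⟨_, rfl⟩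
      rw [hP] at him hle ⊢
      obtain ⟨u1, h1⟩ : ∃ a, (x1 : ℕ) * P = a := ⟨_, rfl⟩
      obtain ⟨u2, h2⟩ : ∃ a, (x1 : ℕ) * X = a := ⟨_, rfl⟩
      obtain ⟨v1, h3⟩ : ∃ a, (j : ℕ) * P = a := ⟨_, rfl⟩
      obtain ⟨v2, h4⟩ : ∃ a, (j : ℕ) * X = a := ⟨_, rfl⟩
      obtain ⟨r, h5⟩ : ∃ a, (i : ℕ) * m = a := ⟨_, rfl⟩
      rw [h1, h2, h3, h4] at hle ⊢
      rw [h5] at him ⊢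
      omega
  -- the `A * T` block vanishes
  have hz2 : ∀ (x : Fin X),
      (∑ x1 : Fin K₁, ∑ x2 : Fin m,
        if ↑x2 + ↑x1 * m + ((K₂ - 1) * (K₁ * m) + (K₂ - 1) * X + K₁ * m + ↑x) =
            m - 1 + ↑i * m + (↑j * (K₁ * m) + ↑j * X) then A x1 x2 * T x else 0) = 0 := by
    intro x
    apply Finset.sum_eq_zero
    intro x1 _
    apply Finset.sum_eq_zero
    intro x2 _
    rw [if_neg]
    have hx2 : (x2 : ℕ) < m := x2.isLt
    obtain ⟨P, hP⟩ : ∃ P, K₁ * m = P := ⟨_, rfl⟩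
    rw [hP] at him hjw ⊢
    obtain ⟨s, h1⟩ : ∃ a, (x1 : ℕ) * m = a := ⟨_, rfl⟩
    obtain ⟨w1, h2⟩ : ∃ a, (K₂ - 1) * P = a := ⟨_, rfl⟩
    obtain ⟨w2, h3⟩ : ∃ a, (K₂ - 1) * X = a := ⟨_, rfl⟩
    obtain ⟨v1, h4⟩ : ∃ a, (j : ℕ) * P = a := ⟨_, rfl⟩
    obtain ⟨v2, h5⟩ : ∃ a, (j : ℕ) * X = a := ⟨_, rfl⟩
    obtain ⟨r, h6⟩ : ∃ a, (i : ℕ) * m = a := ⟨_, rfl⟩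
    rw [h1]
    rw [h2, h3] at hjw ⊢
    rw [h4, h5] at hjw ⊢
    rw [h6] at him ⊢
    omega
  -- the `Rn * T` block vanishes
  have hz3 : ∀ (x : Fin X),
      (∑ x1 : Fin X,
        if K₁ * m + ↑x1 + ((K₂ - 1) * (K₁ * m) + (K₂ - 1) * X + K₁ * m + ↑x) =
            m - 1 + ↑i * m + (↑j * (K₁ * m) + ↑j * X) then Rn x1 * T x else 0) = 0 := by
    intro x
    apply Finset.sum_eq_zero
    intro t _
    rw [if_neg]
    obtain ⟨P, hP⟩ : ∃ P, K₁ * m = P := ⟨_, rfl⟩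
    rw [hP] at him hjw ⊢
    obtain ⟨w1, h2⟩ : ∃ a, (K₂ - 1) * P = a := ⟨_, rfl⟩
    obtain ⟨w2, h3⟩ : ∃ a, (K₂ - 1) * X = a := ⟨_, rfl⟩
    obtain ⟨v1, h4⟩ : ∃ a, (j : ℕ) * P = a := ⟨_, rfl⟩
    obtain ⟨v2, h5⟩ : ∃ a, (j : ℕ) * X = a := ⟨_, rfl⟩
    obtain ⟨r, h6⟩ : ∃ a, (i : ℕ) * m = a := ⟨_, rfl⟩
    rw [h2, h3, h4, h5] at hjw ⊢
    rw [h6] at him ⊢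
    omega
  -- the main block: identify exactly which indices contribute
  have hmain : ∀ (x : Fin m) (x1 : Fin K₂) (x2 : Fin K₁) (x3 : Fin m),
      (↑x3 + ↑x2 * m + (m - 1 - ↑x + (↑x1 * (K₁ * m) + ↑x1 * X)) =
          m - 1 + ↑i * m + (↑j * (K₁ * m) + ↑j * X))
        ↔ (x = x3 ∧ i = x2 ∧ j = x1) := by
    intro x x1 x2 x3
    have hx : (x : ℕ) < m := x.isLt
    have hx3 : (x3 : ℕ) < m := x3.isLt
    have hx2m : (x2 : ℕ) * m + m ≤ K₁ * m := by
      calc (x2 : ℕ) * m + m = ((x2 : ℕ) + 1) * m := by ring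
        _ ≤ K₁ * m := Nat.mul_le_mul_right m x2.isLt
    constructor
    · intro h
      rcases Nat.lt_trichotomy (x1 : ℕ) (j : ℕ) with hc | hc | hc
      · exfalso
        have hle : (x1 : ℕ) * (K₁ * m) + (x1 : ℕ) * X + (K₁ * m + X)
            ≤ (j : ℕ) * (K₁ * m) + (j : ℕ) * X := by
          calc (x1 : ℕ) * (K₁ * m) + (x1 : ℕ) * X + (K₁ * m + X)
              = ((x1 : ℕ) + 1) * (K₁ * m + X) := by ring
            _ ≤ (j : ℕ) * (K₁ * m + X) := Nat.mul_le_mul_right _ hc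
            _ = (j : ℕ) * (K₁ * m) + (j : ℕ) * X := by ring
        obtain ⟨P, hP⟩ : ∃ P, K₁ * m = P := ⟨_, rfl⟩
        rw [hP] at him hle h hx2m
        obtain ⟨u1, h1⟩ : ∃ a, (x1 : ℕ) * P = a := ⟨_, rfl⟩
        obtain ⟨u2, h2⟩ : ∃ a, (x1 : ℕ) * X = a := ⟨_, rfl⟩
        obtain ⟨v1, h3⟩ : ∃ a, (j : ℕ) * P = a := ⟨_, rfl⟩
        obtain ⟨v2, h4⟩ : ∃ a, (j : ℕ) * X = a := ⟨_, rfl⟩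
        obtain ⟨r, h5⟩ : ∃ a, (i : ℕ) * m = a := ⟨_, rfl⟩
        obtain ⟨s, h6⟩ : ∃ a, (x2 : ℕ) * m = a := ⟨_, rfl⟩
        rw [h1, h2, h3, h4] at hle h
        rw [h5] at him h
        rw [h6] at hx2m h
        exact absurd h (by omega)
      · rw [hc] at h
        have hs' : (x3 : ℕ) + (x2 : ℕ) * m = (x : ℕ) + (i : ℕ) * m := by
          obtain ⟨P, hP⟩ : ∃ P, K₁ * m = P := ⟨_, rfl⟩
          rw [hP] at h
          obtain ⟨v1, h3⟩ : ∃ a, (j : ℕ) * P = a := ⟨_, rfl⟩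
          obtain ⟨v2, h4⟩ : ∃ a, (j : ℕ) * X = a := ⟨_, rfl⟩
          obtain ⟨r, h5⟩ : ∃ a, (i : ℕ) * m = a := ⟨_, rfl⟩
          obtain ⟨s, h6⟩ : ∃ a, (x2 : ℕ) * m = a := ⟨_, rfl⟩
          rw [h3, h4] at h
          rw [h5, h6] at h ⊢
          omega
        obtain ⟨e1, e2⟩ := sep_divmod_unique hx3 hx hs'
        exact ⟨Fin.ext e1.symm, Fin.ext e2.symm, Fin.ext hc.symm⟩
      · exfalso
        have hle : (j : ℕ) * (K₁ * m) + (j : ℕ) * X + (K₁ * m + X)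
            ≤ (x1 : ℕ) * (K₁ * m) + (x1 : ℕ) * X := by
          calc (j : ℕ) * (K₁ * m) + (j : ℕ) * X + (K₁ * m + X)
              = ((j : ℕ) + 1) * (K₁ * m + X) := by ring
            _ ≤ (x1 : ℕ) * (K₁ * m + X) := Nat.mul_le_mul_right _ hc
            _ = (x1 : ℕ) * (K₁ * m) + (x1 : ℕ) * X := by ring
        obtain ⟨P, hP⟩ : ∃ P, K₁ * m = P := ⟨_, rfl⟩
        rw [hP] at him hle h hx2m
        obtain ⟨u1, h1⟩ : ∃ a, (x1 : ℕ) * P = a := ⟨_, rfl⟩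
        obtain ⟨u2, h2⟩ : ∃ a, (x1 : ℕ) * X = a := ⟨_, rfl⟩
        obtain ⟨v1, h3⟩ : ∃ a, (j : ℕ) * P = a := ⟨_, rfl⟩
        obtain ⟨v2, h4⟩ : ∃ a, (j : ℕ) * X = a := ⟨_, rfl⟩
        obtain ⟨r, h5⟩ : ∃ a, (i : ℕ) * m = a := ⟨_, rfl⟩
        obtain ⟨s, h6⟩ : ∃ a, (x2 : ℕ) * m = a := ⟨_, rfl⟩
        rw [h1, h2, h3, h4] at hle h
        rw [h5] at him h
        rw [h6] at hx2m h
        exact absurd h (by omega)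
    · rintro ⟨rfl, rfl, rfl⟩
      obtain ⟨P, hP⟩ : ∃ P, K₁ * m = P := ⟨_, rfl⟩
      rw [hP]
      obtain ⟨v1, h3⟩ : ∃ a, (j : ℕ) * P = a := ⟨_, rfl⟩
      obtain ⟨v2, h4⟩ : ∃ a, (j : ℕ) * X = a := ⟨_, rfl⟩
      obtain ⟨r, h5⟩ : ∃ a, (i : ℕ) * m = a := ⟨_, rfl⟩
      rw [h3, h4, h5]
      omega
  simp only [hz1, hz2, hz3, add_zero, Finset.sum_const_zero, zero_add]
  simp only [hmain, ite_and, Finset.sum_ite_eq, Finset.mem_univ, if_true]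
end

section
/- Let R be a (possibly noncommutative) ring, let K₁, K₂, m ≥ 1 and X ≥ 0 be integers, and let A_{j,k} (1 ≤ j ≤ K₁, 1 ≤ k ≤ m), B_{j,k} (1 ≤ j ≤ m, 1 ≤ k ≤ K₂), R_i and T_i (1 ≤ i ≤ X) be elements of R. Define q_A(x) = Σ_{j=1}^{K₁} Σ_{k=1}^{m} A_{j,k} x^{(k−1)K₁+(j−1)} + Σ_{i=1}^{X} R_i x^{K₁m+i−1} and q_B(x) = Σ_{j=1}^{m} Σ_{k=1}^{K₂} B_{j,k} x^{(m−j)K₁+(k−1)(K₁m+X)} + Σ_{i=1}^{X} T_i x^{(K₂−1)(K₁m+X)+K₁m+i−1}. Then: (a) for every 1 ≤ j ≤ K₁ and 1 ≤ k' ≤ K₂, the coefficient of x^{(m−1)K₁+(j−1)+(k'−1)(K₁m+X)} in q_A(x)·q_B(x) equals Σ_{k=1}^{m} A_{j,k}·B_{k,k'}; and (b) the natDegree of q_A(x)·q_B(x) is at most (K₂+1)(K₁m+X) − 2. -/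
open Polynomial Finset

/-- The column-ordered secure encoding polynomial of `A` (Section IV-A-2), with
0-based indices; `Xs` is the security parameter. -/
noncomputable def colA {R : Type*} [Ring R] (K₁ m Xs : ℕ)
    (A : Fin K₁ → Fin m → R) (Rn : Fin Xs → R) : R[X] :=
  (∑ j : Fin K₁, ∑ k : Fin m, monomial (k.val * K₁ + j.val) (A j k))
    + ∑ i : Fin Xs, monomial (K₁ * m + i.val) (Rn i)

/-- The column-ordered secure encoding polynomial of `B` (Section IV-A-2), with
0-based indices. -/
noncomputable def colB {R : Type*} [Ring R] (K₁ K₂ m Xs : ℕ)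
    (B : Fin m → Fin K₂ → R) (T : Fin Xs → R) : R[X] :=
  (∑ j : Fin m, ∑ k : Fin K₂, monomial ((m - 1 - j.val) * K₁ + k.val * (K₁ * m + Xs)) (B j k))
    + ∑ i : Fin Xs, monomial ((K₂ - 1) * (K₁ * m + Xs) + K₁ * m + i.val) (T i)

/-- Uniqueness of quotient and remainder. -/
lemma divmod_unique_aux {K a b r s : ℕ} (hr : r < K) (hs : s < K)
    (h : a * K + r = b * K + s) : a = b ∧ r = s := by
  rcases lt_trichotomy a b with h1 | h1 | h1
  · have h2 : (a + 1) * K ≤ b * K := Nat.mul_le_mul_right _ h1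
    rw [add_mul] at h2; omega
  · subst h1; omega
  · have h2 : (b + 1) * K ≤ a * K := Nat.mul_le_mul_right _ h1
    rw [add_mul] at h2; omega

/-- Theorem 2: decodability of the column-ordered secure code. (a) each block
`C_{j,k'} = Σ_k A_{j,k} B_{k,k'}` appears as the coefficient of
`x^{(m-1)K₁+(j-1)+(k'-1)(K₁m+Xs)}` in the product polynomial, and (b) the product
polynomial has degree at most `(K₂+1)(K₁m+Xs) - 2`. -/
theorem stmt_7 {R : Type*} [Ring R] (K₁ K₂ m Xs : ℕ)
    (hK₁ : 1 ≤ K₁) (hK₂ : 1 ≤ K₂) (hm : 1 ≤ m)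
    (A : Fin K₁ → Fin m → R) (B : Fin m → Fin K₂ → R)
    (Rn : Fin Xs → R) (T : Fin Xs → R) :
    (∀ (j : Fin K₁) (k' : Fin K₂),
        (colA K₁ m Xs A Rn * colB K₁ K₂ m Xs B T).coeff
            ((m - 1) * K₁ + j.val + k'.val * (K₁ * m + Xs))
          = ∑ k : Fin m, A j k * B k k')
      ∧ (colA K₁ m Xs A Rn * colB K₁ K₂ m Xs B T).natDegree
          ≤ (K₂ + 1) * (K₁ * m + Xs) - 2 := by
  have hmK : (m - 1) * K₁ + K₁ = K₁ * m := by
    have h : (m - 1 + 1) * K₁ = m * K₁ := by rw [Nat.sub_add_cancel hm]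
    rw [add_mul, one_mul] at h
    rw [Nat.mul_comm K₁ m]
    omega
  have hK2S : (K₂ - 1) * (K₁ * m + Xs) + (K₁ * m + Xs) = K₂ * (K₁ * m + Xs) := by
    have h : (K₂ - 1 + 1) * (K₁ * m + Xs) = K₂ * (K₁ * m + Xs) := by
      rw [Nat.sub_add_cancel hK₂]
    rw [add_mul, one_mul] at h
    omega
  have hKm1 : 1 ≤ K₁ * m := Nat.one_le_iff_ne_zero.mpr (by positivity)
  constructor
  · intro j k'
    have hj := j.isLt
    have hk' := k'.isLt
    -- coefficient of the pure A·B part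
    have cAB : ((∑ jA : Fin K₁, ∑ k : Fin m, monomial (k.val * K₁ + jA.val) (A jA k)) *
          ∑ jB : Fin m, ∑ kB : Fin K₂,
            monomial ((m - 1 - jB.val) * K₁ + kB.val * (K₁ * m + Xs)) (B jB kB)).coeff
          ((m - 1) * K₁ + j.val + k'.val * (K₁ * m + Xs))
        = ∑ k : Fin m, A j k * B k k' := by
      simp only [Finset.sum_mul, Finset.mul_sum, monomial_mul_monomial, finset_sum_coeff,
        coeff_monomial]
      have hcond : ∀ (jB : Fin m) (kB : Fin K₂) (jA : Fin K₁) (k : Fin m),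
          (k.val * K₁ + jA.val + ((m - 1 - jB.val) * K₁ + kB.val * (K₁ * m + Xs))
            = (m - 1) * K₁ + j.val + k'.val * (K₁ * m + Xs))
          ↔ (k = jB ∧ jA = j ∧ kB = k') := by
        intro jB kB jA k
        have hjB := jB.isLt
        have hk := k.isLt
        have hjA := jA.isLt
        have hkB := kB.isLt
        constructor
        · intro h
          have hkB' : kB.val = k'.val := by
            have h3 : (m - 1 - jB.val) * K₁ ≤ (m - 1) * K₁ :=
              Nat.mul_le_mul_right _ (by omega)
            have hkK : k.val * K₁ + K₁ ≤ K₁ * m := by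
              have h4 : (k.val + 1) * K₁ ≤ m * K₁ := Nat.mul_le_mul_right _ hk
              rw [add_mul, Nat.mul_comm m K₁] at h4; omega
            rcases lt_trichotomy kB.val k'.val with h1 | h1 | h1
            · exfalso
              have h2 : (kB.val + 1) * (K₁ * m + Xs) ≤ k'.val * (K₁ * m + Xs) :=
                Nat.mul_le_mul_right _ h1
              rw [add_mul] at h2
              omega
            · exact h1
            · exfalso
              have h2 : (k'.val + 1) * (K₁ * m + Xs) ≤ kB.val * (K₁ * m + Xs) :=
                Nat.mul_le_mul_right _ h1
              rw [add_mul] at h2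
              omega
          have hS : kB.val * (K₁ * m + Xs) = k'.val * (K₁ * m + Xs) := by rw [hkB']
          have h5 : (k.val + (m - 1 - jB.val)) * K₁ + jA.val = (m - 1) * K₁ + j.val := by
            rw [add_mul]; omega
          obtain ⟨h6, h7⟩ := divmod_unique_aux jA.isLt hj h5
          exact ⟨Fin.ext (by omega), Fin.ext h7, Fin.ext hkB'⟩
        · rintro ⟨rfl, rfl, rfl⟩
          have h2 : k.val * K₁ + (m - 1 - k.val) * K₁ = (m - 1) * K₁ := by
            rw [← add_mul, show k.val + (m - 1 - k.val) = m - 1 by omega]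
          omega
      simp only [hcond, ite_and]
      simp
    -- cross term A·T is zero
    have cAT : ((∑ jA : Fin K₁, ∑ k : Fin m, monomial (k.val * K₁ + jA.val) (A jA k)) *
          ∑ i : Fin Xs, monomial ((K₂ - 1) * (K₁ * m + Xs) + K₁ * m + i.val) (T i)).coeff
          ((m - 1) * K₁ + j.val + k'.val * (K₁ * m + Xs)) = 0 := by
      simp only [Finset.sum_mul, Finset.mul_sum, monomial_mul_monomial, finset_sum_coeff,
        coeff_monomial]
      refine Finset.sum_eq_zero fun i _ => Finset.sum_eq_zero fun jA _ =>
        Finset.sum_eq_zero fun k _ => ?_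
      rw [if_neg]
      have h1 : k'.val * (K₁ * m + Xs) ≤ (K₂ - 1) * (K₁ * m + Xs) :=
        Nat.mul_le_mul_right _ (by omega)
      omega
    -- cross term R·B is zero
    have cRB : ((∑ i : Fin Xs, monomial (K₁ * m + i.val) (Rn i)) *
          ∑ jB : Fin m, ∑ kB : Fin K₂,
            monomial ((m - 1 - jB.val) * K₁ + kB.val * (K₁ * m + Xs)) (B jB kB)).coeff
          ((m - 1) * K₁ + j.val + k'.val * (K₁ * m + Xs)) = 0 := by
      simp only [Finset.sum_mul, Finset.mul_sum, monomial_mul_monomial, finset_sum_coeff,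
        coeff_monomial]
      refine Finset.sum_eq_zero fun jB _ => Finset.sum_eq_zero fun kB _ =>
        Finset.sum_eq_zero fun i _ => ?_
      rw [if_neg]
      intro h
      have hi := i.isLt
      have h3 : (m - 1 - jB.val) * K₁ ≤ (m - 1) * K₁ := Nat.mul_le_mul_right _ (by omega)
      rcases lt_trichotomy kB.val k'.val with h1 | h1 | h1
      · have h2 : (kB.val + 1) * (K₁ * m + Xs) ≤ k'.val * (K₁ * m + Xs) :=
          Nat.mul_le_mul_right _ h1
        rw [add_mul] at h2; omega
      · have hS : kB.val * (K₁ * m + Xs) = k'.val * (K₁ * m + Xs) := by rw [h1]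
        omega
      · have h2 : (k'.val + 1) * (K₁ * m + Xs) ≤ kB.val * (K₁ * m + Xs) :=
          Nat.mul_le_mul_right _ h1
        rw [add_mul] at h2; omega
    -- cross term R·T is zero
    have cRT : ((∑ i : Fin Xs, monomial (K₁ * m + i.val) (Rn i)) *
          ∑ i : Fin Xs, monomial ((K₂ - 1) * (K₁ * m + Xs) + K₁ * m + i.val) (T i)).coeff
          ((m - 1) * K₁ + j.val + k'.val * (K₁ * m + Xs)) = 0 := by
      simp only [Finset.sum_mul, Finset.mul_sum, monomial_mul_monomial, finset_sum_coeff,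
        coeff_monomial]
      refine Finset.sum_eq_zero fun i _ => Finset.sum_eq_zero fun i' _ => ?_
      rw [if_neg]
      have h1 : k'.val * (K₁ * m + Xs) ≤ (K₂ - 1) * (K₁ * m + Xs) :=
        Nat.mul_le_mul_right _ (by omega)
      omega
    have expand : ∀ P Q U V : R[X], (P + Q) * (U + V) = P * U + P * V + (Q * U + Q * V) :=
      fun P Q U V => by rw [add_mul, mul_add, mul_add]
    rw [colA, colB, expand, coeff_add, coeff_add, coeff_add, cAB, cAT, cRB, cRT]
    simp
  · -- degree bound
    have dA : (colA K₁ m Xs A Rn).natDegree ≤ K₁ * m + Xs - 1 := by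
      rw [colA]
      refine (natDegree_add_le _ _).trans (max_le ?_ ?_)
      · refine natDegree_sum_le_of_forall_le _ _ fun jA _ =>
          natDegree_sum_le_of_forall_le _ _ fun k _ => (natDegree_monomial_le _).trans ?_
        have hkK : k.val * K₁ + K₁ ≤ K₁ * m := by
          have h4 : (k.val + 1) * K₁ ≤ m * K₁ := Nat.mul_le_mul_right _ k.isLt
          rw [add_mul, Nat.mul_comm m K₁] at h4; omega
        have := jA.isLt; omega
      · refine natDegree_sum_le_of_forall_le _ _ fun i _ => (natDegree_monomial_le _).trans ?_
        have := i.isLt; omega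
    have dB : (colB K₁ K₂ m Xs B T).natDegree ≤ K₂ * (K₁ * m + Xs) - 1 := by
      rw [colB]
      refine (natDegree_add_le _ _).trans (max_le ?_ ?_)
      · refine natDegree_sum_le_of_forall_le _ _ fun jB _ =>
          natDegree_sum_le_of_forall_le _ _ fun kB _ => (natDegree_monomial_le _).trans ?_
        have h3 : (m - 1 - jB.val) * K₁ ≤ (m - 1) * K₁ := Nat.mul_le_mul_right _ (by omega)
        have h2 : kB.val * (K₁ * m + Xs) ≤ (K₂ - 1) * (K₁ * m + Xs) :=
          Nat.mul_le_mul_right _ (by have := kB.isLt; omega)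
        omega
      · refine natDegree_sum_le_of_forall_le _ _ fun i _ => (natDegree_monomial_le _).trans ?_
        have := i.isLt; omega
    refine (natDegree_mul_le).trans ?_
    have hexp : (K₂ + 1) * (K₁ * m + Xs) = K₂ * (K₁ * m + Xs) + (K₁ * m + Xs) := by
      rw [add_mul, one_mul]
    have hK2S' : K₁ * m + Xs ≤ K₂ * (K₁ * m + Xs) := Nat.le_mul_of_pos_left _ (by omega)
    omega
end

section
/- Let R be a (possibly noncommutative) ring, let K₁, K₂, m ≥ 1 be integers, and let A_{j,k} (1 ≤ j ≤ K₁, 1 ≤ k ≤ m) and B_{j,k} (1 ≤ j ≤ m, 1 ≤ k ≤ K₂) be elements of R. Define the entangled polynomial encodings e_A(x) = Σ_{j=1}^{K₁} Σ_{k=1}^{m} A_{j,k} x^{(k−1)+(j−1)m} and e_B(x) = Σ_{j=1}^{m} Σ_{k=1}^{K₂} B_{j,k} x^{(m−j)+(k−1)K₁m}. Then: (a) for every 1 ≤ i ≤ K₁ and 1 ≤ j ≤ K₂, the coefficient of x^{(m−1)+(i−1)m+(j−1)K₁m} in e_A(x)·e_B(x) equals Σ_{k=1}^{m} A_{i,k}·B_{k,j};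 and (b) the natDegree of e_A(x)·e_B(x) is at most K₁K₂m + m − 2. -/
open Polynomial Finset

/-- The entangled polynomial (EP) encoding of `A` (blocks `A j k` for `j < K₁`,
`k < m`), with 0-based indices. -/
noncomputable def epA {R : Type*} [Ring R] (K₁ m : ℕ)
    (A : Fin K₁ → Fin m → R) : R[X] :=
  ∑ j : Fin K₁, ∑ k : Fin m, monomial (k.val + j.val * m) (A j k)

/-- The entangled polynomial (EP) encoding of `B` (blocks `B j k` for `j < m`,
`k < K₂`), with 0-based indices. -/
noncomputable def epB {R : Type*} [Ring R] (K₁ K₂ m : ℕ)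
    (B : Fin m → Fin K₂ → R) : R[X] :=
  ∑ j : Fin m, ∑ k : Fin K₂, monomial ((m - 1 - j.val) + k.val * (K₁ * m)) (B j k)

lemma ep_key (K₁ m : ℕ) (i j₁ k₁ j₂ k₂ j : ℕ)
    (hj₁ : j₁ < K₁) (hk₁ : k₁ < m) (hj₂ : j₂ < m) (hi : i < K₁) :
    k₁ + j₁ * m + ((m - 1 - j₂) + k₂ * (K₁ * m))
      = (m - 1) + i * m + j * (K₁ * m) ↔ (j₁ = i ∧ k₁ = j₂ ∧ k₂ = j) := by
  have h1 : j₁ * m + m ≤ K₁ * m := by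
    have := Nat.mul_le_mul_right m (show j₁ + 1 ≤ K₁ from hj₁)
    simpa [add_mul] using this
  have h2 : i * m + m ≤ K₁ * m := by
    have := Nat.mul_le_mul_right m (show i + 1 ≤ K₁ from hi)
    simpa [add_mul] using this
  constructor
  · intro h
    rcases lt_trichotomy k₂ j with hlt | rfl | hgt
    · have h3 : k₂ * (K₁ * m) + K₁ * m ≤ j * (K₁ * m) := by
        have := Nat.mul_le_mul_right (K₁ * m) (show k₂ + 1 ≤ j from hlt)
        simpa [add_mul] using this
      omega
    · rcases lt_trichotomy j₁ i with hlt' | rfl | hgt'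
      · have h4 : j₁ * m + m ≤ i * m := by
          have := Nat.mul_le_mul_right m (show j₁ + 1 ≤ i from hlt')
          simpa [add_mul] using this
        omega
      · refine ⟨rfl, by omega, rfl⟩
      · have h4 : i * m + m ≤ j₁ * m := by
          have := Nat.mul_le_mul_right m (show i + 1 ≤ j₁ from hgt')
          simpa [add_mul] using this
        omega
    · have h3 : j * (K₁ * m) + K₁ * m ≤ k₂ * (K₁ * m) := by
        have := Nat.mul_le_mul_right (K₁ * m) (show j + 1 ≤ k₂ from hgt)
        simpa [add_mul] using this
      omega
  · rintro ⟨rfl, rfl, rfl⟩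
    omega


/-- Decodability of the entangled polynomial code: (a) each block
`C_{i,j} = Σ_k A_{i,k} B_{k,j}` appears as the coefficient of
`x^{(m-1)+(i-1)m+(j-1)K₁m}` in the product polynomial, and (b) the product
polynomial has degree at most `K₁K₂m + m - 2`. -/
theorem stmt_9 {R : Type*} [Ring R] (K₁ K₂ m : ℕ)
    (hK₁ : 1 ≤ K₁) (hK₂ : 1 ≤ K₂) (hm : 1 ≤ m)
    (A : Fin K₁ → Fin m → R) (B : Fin m → Fin K₂ → R) :
    (∀ (i : Fin K₁) (j : Fin K₂),
        (epA K₁ m A * epB K₁ K₂ m B).coeff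
            ((m - 1) + i.val * m + j.val * (K₁ * m))
          = ∑ k : Fin m, A i k * B k j)
      ∧ (epA K₁ m A * epB K₁ K₂ m B).natDegree ≤ K₁ * K₂ * m + m - 2 := by
  constructor
  · intro i j
    have hcoeff : (epA K₁ m A * epB K₁ K₂ m B).coeff
        ((m - 1) + i.val * m + j.val * (K₁ * m))
        = ∑ j₂ : Fin m, ∑ k₂ : Fin K₂, ∑ j₁ : Fin K₁, ∑ k₁ : Fin m,
            if (k₁.val + j₁.val * m) + ((m - 1 - j₂.val) + k₂.val * (K₁ * m))
                = (m - 1) + i.val * m + j.val * (K₁ * m)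
            then A j₁ k₁ * B j₂ k₂ else 0 := by
      simp only [epA, epB, Finset.sum_mul, Finset.mul_sum, monomial_mul_monomial,
        finset_sum_coeff, coeff_monomial]
    rw [hcoeff]
    have hiff : ∀ (j₁ : Fin K₁) (k₁ j₂ : Fin m) (k₂ : Fin K₂),
        ((k₁.val + j₁.val * m) + ((m - 1 - j₂.val) + k₂.val * (K₁ * m))
            = (m - 1) + i.val * m + j.val * (K₁ * m))
          ↔ (j₁ = i ∧ k₁ = j₂ ∧ k₂ = j) := by
      intro j₁ k₁ j₂ k₂
      rw [ep_key K₁ m i.val j₁.val k₁.val j₂.val k₂.val j.val j₁.isLt k₁.isLt j₂.isLt i.isLt]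
      simp [Fin.ext_iff]
    simp only [hiff]
    simp [Finset.sum_ite_eq, Finset.sum_ite_eq', ite_and]
  · refine (natDegree_mul_le).trans ?_
    have hA : (epA K₁ m A).natDegree ≤ K₁ * m - 1 := by
      refine natDegree_sum_le_of_forall_le _ _ fun j₁ _ => ?_
      refine natDegree_sum_le_of_forall_le _ _ fun k₁ _ => ?_
      refine (natDegree_monomial_le _).trans ?_
      have h1 : j₁.val * m + m ≤ K₁ * m := by
        have := Nat.mul_le_mul_right m (show j₁.val + 1 ≤ K₁ from j₁.isLt)
        simpa [add_mul] using this
      have := k₁.isLt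
      omega
    have hB : (epB K₁ K₂ m B).natDegree ≤ (m - 1) + (K₂ * (K₁ * m) - K₁ * m) := by
      refine natDegree_sum_le_of_forall_le _ _ fun j₂ _ => ?_
      refine natDegree_sum_le_of_forall_le _ _ fun k₂ _ => ?_
      refine (natDegree_monomial_le _).trans ?_
      have h1 : k₂.val * (K₁ * m) + K₁ * m ≤ K₂ * (K₁ * m) := by
        have := Nat.mul_le_mul_right (K₁ * m) (show k₂.val + 1 ≤ K₂ from k₂.isLt)
        simpa [add_mul] using this
      have := j₂.isLt
      omega
    have hcomm : K₂ * (K₁ * m) = K₁ * K₂ * m := by ring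
    have hle : m ≤ K₁ * m := Nat.le_mul_of_pos_left m hK₁
    have hle2 : K₁ * m ≤ K₁ * K₂ * m := by
      calc K₁ * m = K₁ * 1 * m := by ring
        _ ≤ K₁ * K₂ * m := by
            exact Nat.mul_le_mul_right m (Nat.mul_le_mul_left K₁ hK₂)
    omega
end

section
/- Let F be a field, let R be an F-algebra (possibly noncommutative), let K₁, K₂, m ≥ 1 be integers, let A_{j,k} (1 ≤ j ≤ K₁, 1 ≤ k ≤ m) and B_{j,k} (1 ≤ j ≤ m, 1 ≤ k ≤ K₂) be elements of R, and let γ ∈ F. Let e_A, e_B be the entangled polynomial encodings over R. Then the coefficient of x^{m−1} in the remainder of e_A(x)·e_B(x) upon division by x^m − γ·1_R equals Σ_{i=1}^{K₁} Σ_{j=1}^{K₂} γ^{(i−1)+(j−1)K₁} · (Σ_{k=1}^{m} A_{i,k}·B_{k,j}). -/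
/-!
With `c = γ • 1`, since `X ^ m ≡ c` modulo `X ^ m - C c`, the monomial `a X^(r + m s)` with `r < m` reduces to
`c ^ s a X^r`. The product of the two encodings is a sum of monomials `A i k B j l X^n` with
`n = (k + (m - 1 - j)) + m (i + l K₁)`, and `n` is `m - 1` modulo `m` exactly when `k = j`;
so only the terms of the block products `Σ_k A i k B k l` reach the coefficient of `X^(m-1)`,
each weighted by `c ^ (i + l K₁)`.
-/

open Polynomial Finset

namespace Polynomial

variable {R : Type*} [Ring R]

theorem add_modByMonic_of_monic {q : R[X]} (hq : q.Monic) (p₁ p₂ : R[X]) :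
    (p₁ + p₂) %ₘ q = p₁ %ₘ q + p₂ %ₘ q := by
  nontriviality R
  refine (div_modByMonic_unique (p₁ /ₘ q + p₂ /ₘ q) _ hq ⟨?_, ?_⟩).2
  · rw [mul_add, add_add_add_comm, modByMonic_add_div, modByMonic_add_div]
  · exact (degree_add_le _ _).trans_lt
      (max_lt (degree_modByMonic_lt _ hq) (degree_modByMonic_lt _ hq))

theorem sum_modByMonic_of_monic {q : R[X]} (hq : q.Monic) {ι : Type*} (s : Finset ι)
    (f : ι → R[X]) : (∑ i ∈ s, f i) %ₘ q = ∑ i ∈ s, f i %ₘ q :=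
  map_sum (AddMonoidHom.mk' (· %ₘ q) (add_modByMonic_of_monic hq)) f s

theorem monomial_modByMonic_X_pow_sub_C (c a : R) {m r : ℕ} (hr : r < m) (s : ℕ) :
    monomial (r + m * s) a %ₘ (X ^ m - C c) = monomial r (c ^ s * a) := by
  nontriviality R
  have hq : (X ^ m - C c).Monic := monic_X_pow_sub_C c (by omega)
  induction s generalizing a with
  | zero =>
    rw [mul_zero, add_zero, pow_zero, one_mul, modByMonic_eq_self_iff hq,
      degree_X_pow_sub_C (by omega)]
    exact (degree_monomial_le r a).trans_lt (WithBot.coe_lt_coe.2 hr)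
  | succ s ih =>
    have hsplit : monomial (r + m * (s + 1)) a
        = (X ^ m - C c) * monomial (r + m * s) a + monomial (r + m * s) (c * a) := by
      rw [sub_mul, X_pow_mul_monomial, C_mul_monomial, sub_add_cancel, mul_add_one,
        add_assoc, add_comm (m * s)]
    rw [hsplit, add_modByMonic_of_monic hq, self_mul_modByMonic hq, zero_add, ih,
      pow_succ, mul_assoc]

theorem coeff_monomial_modByMonic_X_pow_sub_C_sub_one (c a : R) {m k j : ℕ} (hk : k < m)
    (hj : j < m) (t : ℕ) :
    (monomial (k + (m - 1 - j) + m * t) a %ₘ (X ^ m - C c)).coeff (m - 1)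
      = if k = j then c ^ t * a else 0 := by
  rcases lt_or_ge (k + (m - 1 - j)) m with h | h
  · rw [monomial_modByMonic_X_pow_sub_C c a h, coeff_monomial]
    exact if_congr (by omega) rfl rfl
  · have hn : k + (m - 1 - j) + m * t = (k + (m - 1 - j) - m) + m * (t + 1) := by
      rw [mul_add_one]; omega
    rw [hn, monomial_modByMonic_X_pow_sub_C c a (by omega), coeff_monomial,
      if_neg (by omega), if_neg (by omega)]

end Polynomial

theorem stmt_10_general {F : Type*} [Field F] {R : Type*} [Ring R] [Algebra F R]
    (K₁ K₂ m : ℕ) (hm : 1 ≤ m)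
    (A : Fin K₁ → Fin m → R) (B : Fin m → Fin K₂ → R) (γ : F) :
    ((epA K₁ m A * epB K₁ K₂ m B) %ₘ (X ^ m - C (algebraMap F R γ))).coeff (m - 1)
      = ∑ i : Fin K₁, ∑ j : Fin K₂,
          γ ^ (i.val + j.val * K₁) • (∑ k : Fin m, A i k * B k j) := by
  have hq : (X ^ m - C (algebraMap F R γ)).Monic := monic_X_pow_sub_C _ (by omega)
  have hdeg : ∀ (i : Fin K₁) (k j : Fin m) (l : Fin K₂),
      k.val + i.val * m + (m - 1 - j.val + l.val * (K₁ * m))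
        = k.val + (m - 1 - j.val) + m * (i.val + l.val * K₁) := fun _ _ _ _ => by ring
  simp only [epA, epB, sum_mul]
  simp only [mul_sum, monomial_mul_monomial, hdeg,
    sum_modByMonic_of_monic hq, finsetSum_coeff,
    coeff_monomial_modByMonic_X_pow_sub_C_sub_one _ _ (Fin.is_lt _) (Fin.is_lt _),
    Fin.val_inj, sum_ite_irrel, sum_const_zero, Fintype.sum_ite_eq]
  refine sum_congr rfl fun i _ => ?_
  rw [sum_comm]
  refine sum_congr rfl fun l _ => ?_
  rw [Algebra.smul_def, map_pow, mul_sum]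

/-- Key step of Theorem 4 (EP-DFT): the coefficient of `x^{m-1}` of the product of
the EP encodings modulo `x^m - γ·1_R` is the Polynomial-code combination
`Σ_{i,j} γ^{(i-1)+(j-1)K₁} C_{i,j}` of the desired blocks. -/
theorem stmt_10 {F : Type*} [Field F] {R : Type*} [Ring R] [Algebra F R]
    (K₁ K₂ m : ℕ) (hK₁ : 1 ≤ K₁) (hK₂ : 1 ≤ K₂) (hm : 1 ≤ m)
    (A : Fin K₁ → Fin m → R) (B : Fin m → Fin K₂ → R) (γ : F) :
    ((epA K₁ m A * epB K₁ K₂ m B) %ₘ (X ^ m - C (algebraMap F R γ))).coeff (m - 1)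
      = ∑ i : Fin K₁, ∑ j : Fin K₂,
          γ ^ (i.val + j.val * K₁) • (∑ k : Fin m, A i k * B k j) :=
  stmt_10_general K₁ K₂ m hm A B γ
end

section
/- Let R be a (possibly noncommutative) ring, let r be an odd positive integer with ρ = (r+1)/2, let L ≥ 1 be an integer, set m = Lρ, and let A_1, …, A_m and B_1, …, B_m be elements of R. Define, for 0 ≤ t ≤ L−1, the polynomials Q_t(x) = Σ_{j=1}^{ρ} A_{tρ+j} x^{j−1} and Q'_t(x) = Σ_{j=1}^{ρ} B_{m−tρ−j+1} x^{j−1} over R. Then the coefficient of x^{ρ−1} in Σ_{t=0}^{L−1} Q_t(x)·Q'_{L−1−t}(x) equals Σ_{i=1}^{m} A_i·B_i. -/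
open Polynomial Finset

private lemma sum_grid {M : Type*} [AddCommMonoid M] (L ρ : ℕ) (f : ℕ → M) :
    ∑ t ∈ range L, ∑ i ∈ range ρ, f (t * ρ + i) = ∑ k ∈ range (L * ρ), f k := by
  induction L with
  | zero => simp
  | succ n ih =>
      rw [Finset.sum_range_succ, ih, Nat.succ_mul, Finset.sum_range_add]

/-- Decodability core of Theorem 5 (LRC scheme): with `ρ = (r+1)/2`, `m = Lρ`, and
chunk polynomials `Q_t(x) = Σ_{j=1}^{ρ} A_{tρ+j} x^{j-1}`,
`Q'_t(x) = Σ_{j=1}^{ρ} B_{m-tρ-j+1} x^{j-1}`, the coefficient of `x^{ρ-1}` in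
`Σ_{t=0}^{L-1} Q_t · Q'_{L-1-t}` is the inner product `Σ_{i=1}^{m} A_i B_i`.
(`A i`, `B i` use 1-based indexing.) -/
theorem stmt_11 {R : Type*} [Ring R] (r L ρ m : ℕ)
    (hodd : Odd r) (hrpos : 0 < r) (hL : 1 ≤ L)
    (hρ : ρ = (r + 1) / 2) (hm : m = L * ρ)
    (A B : ℕ → R) (Q Q' : ℕ → R[X])
    (hQ : ∀ t, Q t = ∑ j ∈ range ρ, monomial j (A (t * ρ + j + 1)))
    (hQ' : ∀ t, Q' t = ∑ j ∈ range ρ, monomial j (B (m - t * ρ - j))) :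
    (∑ t ∈ range L, Q t * Q' (L - 1 - t)).coeff (ρ - 1)
      = ∑ i ∈ range m, A (i + 1) * B (i + 1) := by
  have hρpos : 0 < ρ := by subst hρ; omega
  have hcoeffQ : ∀ t i, i < ρ → (Q t).coeff i = A (t * ρ + i + 1) := by
    intro t i hi
    rw [hQ, finset_sum_coeff]
    simp only [coeff_monomial]
    rw [Finset.sum_ite_eq' (range ρ) i]
    simp [hi]
  have hcoeffQ' : ∀ t i, i < ρ → (Q' t).coeff i = B (m - t * ρ - i) := by
    intro t i hi
    rw [hQ', finset_sum_coeff]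
    simp only [coeff_monomial]
    rw [Finset.sum_ite_eq' (range ρ) i]
    simp [hi]
  rw [finset_sum_coeff]
  have key : ∀ t ∈ range L,
      (Q t * Q' (L - 1 - t)).coeff (ρ - 1)
        = ∑ i ∈ range ρ, A (t * ρ + i + 1) * B (t * ρ + i + 1) := by
    intro t ht
    rw [coeff_mul, Finset.Nat.sum_antidiagonal_eq_sum_range_succ
      (fun i j => (Q t).coeff i * (Q' (L - 1 - t)).coeff j)]
    have hs : (ρ - 1).succ = ρ := by omega
    rw [hs]
    refine Finset.sum_congr rfl (fun i hi => ?_)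
    rw [mem_range] at hi
    rw [hcoeffQ t i hi, hcoeffQ' (L - 1 - t) (ρ - 1 - i) (by omega)]
    congr 2
    rw [mem_range] at ht
    have h1 : (L - 1 - t) * ρ ≤ m := by
      rw [hm]; exact Nat.mul_le_mul_right ρ (by omega)
    have h2 : m - (L - 1 - t) * ρ = (t + 1) * ρ := by
      rw [hm, ← Nat.sub_mul]; congr 1; omega
    have h3 : (t + 1) * ρ = t * ρ + ρ := by ring
    omega
  rw [Finset.sum_congr rfl key]
  have := sum_grid L ρ (fun k => A (k + 1) * B (k + 1))
  rw [hm]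
  rw [← this]
end

section
/- Let R be a (possibly noncommutative) ring, let r be an odd positive integer, δ ≥ 2 and L ≥ 1 integers, set m = L(r+1)/2, and let Q_0,…,Q_{L−1} and Q'_0,…,Q'_{L−1} be polynomials over R each of natDegree at most (r−1)/2, and let g be a polynomial over R of natDegree r+δ−1. Define p_A(x) = Σ_{t=0}^{L−1} Q_t(x)·g(x)^t and p_B(x) = Σ_{t=0}^{L−1} Q'_t(x)·g(x)^t. Then the natDegree of p_A(x)·p_B(x) is at most r − 1 + 2(L−1)(r+δ−1), which equals 4m − r − 3 + (4m/(r+1) − 2)(δ−2). -/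
/-!
Each summand `Q_t g^t` of an encoding has degree at most `(r-1)/2 + t·deg g`, so each encoding
has degree at most `(r-1)/2 + (L-1)(r+δ-1)`, and degrees add at most under multiplication.
Since `r` is odd the two halves `(r-1)/2` add up to `r-1`. The closed form in `m` comes from
`4m/(r+1) = 2L`.
-/

open Polynomial Finset

theorem natDegree_sum_mul_pow_le {R : Type*} [Semiring R] {P : ℕ → R[X]} {g : R[X]} {d : ℕ}
    (L : ℕ) (hP : ∀ t, (P t).natDegree ≤ d) :
    (∑ t ∈ range L, P t * g ^ t).natDegree ≤ d + (L - 1) * g.natDegree := by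
  refine natDegree_sum_le_of_forall_le _ _ fun t ht => ?_
  have ht : t ≤ L - 1 := Nat.le_sub_one_of_lt (mem_range.mp ht)
  calc (P t * g ^ t).natDegree ≤ (P t).natDegree + t * g.natDegree :=
        natDegree_mul_le.trans (Nat.add_le_add_left natDegree_pow_le _)
    _ ≤ d + (L - 1) * g.natDegree := by gcongr; exact hP t

theorem natDegree_sum_mul_pow_mul_sum_mul_pow_le {R : Type*} [Semiring R] {P P' : ℕ → R[X]}
    {g : R[X]} {d : ℕ} (L : ℕ) (hP : ∀ t, (P t).natDegree ≤ d) (hP' : ∀ t, (P' t).natDegree ≤ d) :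
    ((∑ t ∈ range L, P t * g ^ t) * ∑ t ∈ range L, P' t * g ^ t).natDegree
      ≤ 2 * d + 2 * (L - 1) * g.natDegree := by
  calc _ ≤ (d + (L - 1) * g.natDegree) + (d + (L - 1) * g.natDegree) :=
        natDegree_mul_le.trans
          (add_le_add (natDegree_sum_mul_pow_le L hP) (natDegree_sum_mul_pow_le L hP'))
    _ = 2 * d + 2 * (L - 1) * g.natDegree := by ring

theorem sub_one_add_two_mul_eq_of_odd {r δ L m : ℕ} (hodd : Odd r) (hδ : 2 ≤ δ) (hL : 1 ≤ L)
    (hm : m = L * ((r + 1) / 2)) :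
    r - 1 + 2 * (L - 1) * (r + δ - 1)
      = 4 * m - r - 3 + (4 * m / (r + 1) - 2) * (δ - 2) := by
  obtain ⟨k, rfl⟩ := hodd
  obtain ⟨L, rfl⟩ := Nat.exists_eq_add_of_le' hL
  obtain ⟨δ, rfl⟩ := Nat.exists_eq_add_of_le' hδ
  rw [show (2 * k + 1 + 1) / 2 = k + 1 by omega] at hm
  subst hm
  have hquot : 4 * ((L + 1) * (k + 1)) / (2 * k + 1 + 1) = 2 * (L + 1) :=
    Nat.div_eq_of_eq_mul_left (by omega) (by ring)
  have hsub : 4 * ((L + 1) * (k + 1)) - (2 * k + 1) - 3 = 4 * L * (k + 1) + 2 * k := by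
    rw [Nat.sub_sub, Nat.sub_eq_of_eq_add]; ring
  rw [hquot, hsub, show 2 * (L + 1) - 2 = 2 * L by omega,
    show 2 * k + 1 + (δ + 2) - 1 = 2 * k + δ + 2 by omega]
  simp only [Nat.add_sub_cancel]
  ring

theorem stmt_12_general {R : Type*} [Ring R] (r δ L m : ℕ)
    (hodd : Odd r) (hδ : 2 ≤ δ) (hL : 1 ≤ L)
    (hm : m = L * ((r + 1) / 2))
    (Q Q' : ℕ → R[X])
    (hQ : ∀ t, (Q t).natDegree ≤ (r - 1) / 2)
    (hQ' : ∀ t, (Q' t).natDegree ≤ (r - 1) / 2)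
    (g : R[X]) (hg : g.natDegree = r + δ - 1)
    (pA pB : R[X])
    (hpA : pA = ∑ t ∈ range L, Q t * g ^ t)
    (hpB : pB = ∑ t ∈ range L, Q' t * g ^ t) :
    (pA * pB).natDegree ≤ r - 1 + 2 * (L - 1) * (r + δ - 1)
      ∧ r - 1 + 2 * (L - 1) * (r + δ - 1)
          = 4 * m - r - 3 + (4 * m / (r + 1) - 2) * (δ - 2) := by
  refine ⟨?_, sub_one_add_two_mul_eq_of_odd hodd hδ hL hm⟩
  have hhalf : 2 * ((r - 1) / 2) = r - 1 := by obtain ⟨k, rfl⟩ := hodd; omega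
  rw [hpA, hpB, ← hg, ← hhalf]
  exact natDegree_sum_mul_pow_mul_sum_mul_pow_le L hQ hQ'

/-- Degree computation underlying Theorem 5: if the chunk polynomials `Q_t, Q'_t` have
degree at most `(r-1)/2` and `g` has degree `r+δ-1`, then the product of the LRC
encodings `p_A = Σ_t Q_t g^t`, `p_B = Σ_t Q'_t g^t` has degree at most
`r - 1 + 2(L-1)(r+δ-1) = 4m - r - 3 + (4m/(r+1) - 2)(δ-2)`, where `m = L(r+1)/2`. -/
theorem stmt_12 {R : Type*} [Ring R] (r δ L m : ℕ)
    (hodd : Odd r) (hrpos : 0 < r) (hδ : 2 ≤ δ) (hL : 1 ≤ L)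
    (hm : m = L * ((r + 1) / 2))
    (Q Q' : ℕ → R[X])
    (hQ : ∀ t, (Q t).natDegree ≤ (r - 1) / 2)
    (hQ' : ∀ t, (Q' t).natDegree ≤ (r - 1) / 2)
    (g : R[X]) (hg : g.natDegree = r + δ - 1)
    (pA pB : R[X])
    (hpA : pA = ∑ t ∈ range L, Q t * g ^ t)
    (hpB : pB = ∑ t ∈ range L, Q' t * g ^ t) :
    (pA * pB).natDegree ≤ r - 1 + 2 * (L - 1) * (r + δ - 1)
      ∧ r - 1 + 2 * (L - 1) * (r + δ - 1)
          = 4 * m - r - 3 + (4 * m / (r + 1) - 2) * (δ - 2) :=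
  stmt_12_general r δ L m hodd hδ hL hm Q Q' hQ hQ' g hg pA pB hpA hpB
end

section
/- Let F be a commutative ring, let r be an odd positive integer and L ≥ 1 an integer, let Q_0,…,Q_{L−1}, Q'_0,…,Q'_{L−1} be polynomials over F each of natDegree at most (r−1)/2, let g be a polynomial over F, and define p_A(x) = Σ_{t=0}^{L−1} Q_t(x)·g(x)^t and p_B(x) = Σ_{t=0}^{L−1} Q'_t(x)·g(x)^t. Let x₀ ∈ F and γ ∈ F with g(x₀) = γ, and define P_γ(x) = (Σ_{t=0}^{L−1} γ^t·Q_t(x))·(Σ_{t=0}^{L−1} γ^t·Q'_t(x)). Then p_A(x₀)·p_B(x₀) = P_γ(x₀), and the natDegree of P_γ is at most r − 1. -/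
open Polynomial Finset

/-- Locality claim in the proof of Theorem 5: at any point `x₀` where `g` takes the
value `γ`, the product of the LRC encodings `p_A = Σ_t Q_t g^t`, `p_B = Σ_t Q'_t g^t`
agrees with the polynomial `P_γ = (Σ_t γ^t Q_t)·(Σ_t γ^t Q'_t)` of degree at most
`r - 1`. -/
theorem stmt_13 {F : Type*} [CommRing F] (r L : ℕ)
    (hodd : Odd r) (hrpos : 0 < r) (hL : 1 ≤ L)
    (Q Q' : ℕ → F[X])
    (hQ : ∀ t, (Q t).natDegree ≤ (r - 1) / 2)
    (hQ' : ∀ t, (Q' t).natDegree ≤ (r - 1) / 2)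
    (g : F[X]) (pA pB : F[X])
    (hpA : pA = ∑ t ∈ range L, Q t * g ^ t)
    (hpB : pB = ∑ t ∈ range L, Q' t * g ^ t)
    (x₀ γ : F) (hγ : g.eval x₀ = γ)
    (Pγ : F[X])
    (hPγ : Pγ = (∑ t ∈ range L, γ ^ t • Q t) * (∑ t ∈ range L, γ ^ t • Q' t)) :
    (pA * pB).eval x₀ = Pγ.eval x₀ ∧ Pγ.natDegree ≤ r - 1 := by
  constructor
  · subst hpA hpB hPγ hγ
    simp [eval_finset_sum, mul_comm]
  · have hdeg : ∀ (R : ℕ → F[X]), (∀ t, (R t).natDegree ≤ (r - 1) / 2) →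
        (∑ t ∈ range L, γ ^ t • R t).natDegree ≤ (r - 1) / 2 := by
      intro R hR
      refine natDegree_sum_le_of_forall_le _ _ fun t _ => ?_
      exact (natDegree_smul_le _ _).trans (hR t)
    have h2 : (r - 1) / 2 + (r - 1) / 2 ≤ r - 1 := by
      obtain ⟨k, rfl⟩ := hodd
      omega
    calc Pγ.natDegree ≤ _ + _ := hPγ ▸ natDegree_mul_le
      _ ≤ r - 1 := le_trans (add_le_add (hdeg Q hQ) (hdeg Q' hQ')) h2
end

section
/- Let r be an odd positive integer, δ ≥ 2 and L ≥ 1 integers. Set d = r + δ − 1, D = r − 1 + 2(L−1)d, e = (r−1)/2 + (L−1)d, and k = L·d. Then: (a) d divides k; (b) e ≤ k − 1; (c) D − k < e (equivalently k ≥ D + 1 − e = e + 1, using D = 2e); and (d) k is the smallest multiple of d that is at least e + 1. -/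
/-- Theorem 6 (LRC-DFT), arithmetic content: with `d = r+δ-1`, product-polynomial
degree `D = r-1+2(L-1)d`, target coefficient position `e = (r-1)/2 + (L-1)d`, the
choice `k = L·d` satisfies (a) `d ∣ k`, (b) `e ≤ k-1`, (c) `D - k < e`
(equivalently `k ≥ D + 1 - e = e + 1`, using `D = 2e`), and (d) `k` is the smallest
multiple of `d` that is at least `e + 1`. -/
theorem stmt_14 (r δ L d D e k : ℕ)
    (hodd : Odd r) (hrpos : 0 < r) (hδ : 2 ≤ δ) (hL : 1 ≤ L)
    (hd : d = r + δ - 1)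
    (hD : D = r - 1 + 2 * (L - 1) * d)
    (he : e = (r - 1) / 2 + (L - 1) * d)
    (hk : k = L * d) :
    d ∣ k
      ∧ e ≤ k - 1
      ∧ (D : ℤ) - (k : ℤ) < (e : ℤ)
      ∧ D = 2 * e
      ∧ (∀ k' : ℕ, d ∣ k' → e + 1 ≤ k' → k ≤ k') := by
  obtain ⟨s, hs⟩ := hodd
  subst hs
  have hd' : d = 2 * s + δ := by omega
  have hhalf : (2 * s + 1 - 1) / 2 = s := by omega
  rw [hhalf] at he
  obtain ⟨L', rfl⟩ : ∃ L', L = L' + 1 := ⟨L - 1, by omega⟩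
  have hL1 : L' + 1 - 1 = L' := by omega
  rw [hL1] at hD he
  rw [show 2 * L' * d = 2 * (L' * d) from by ring] at hD
  have hek : e < k := by
    rw [he, hk]; nlinarith
  refine ⟨⟨L' + 1, by rw [hk, mul_comm]⟩, by omega, by omega, by omega, ?_⟩
  rintro k' ⟨t, rfl⟩ hk'
  have ht : L' < t := by nlinarith
  calc k = (L' + 1) * d := hk
    _ ≤ d * t := by nlinarith
end
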